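/- For every finite simple connected graph G with at least one edge the following implications hold: if G is edge critical then G is irreducible, and if G is irreducible then G is vertex critical. -/
import Mathlib


/-- The vertex covering number `α₀` of the induced subgraph of `G` on the set of
vertices `S`: the least cardinality of a set `C ⊆ S` covering every edge of `G`
with both endpoints in `S`. -/
noncomputable def alpha0On {n : ℕ} (G : SimpleGraph (Fin n)) (S : Finset (Fin n)) : ℕ :=
  sInf {k : ℕ | ∃ C : Finset (Fin n), C ⊆ S ∧
    (∀ i ∈ S, ∀ j ∈ S, G.Adj i j → i ∈ C ∨ j ∈ C) ∧ C.card = k}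

/-- The induced subgraph of `G` on the vertex set `S` is irreducible if `S`
cannot be partitioned into two nonempty sets `S1`, `S2` with
`α₀(G[S]) = α₀(G[S1]) + α₀(G[S2])`. -/
def IrreducibleOn {n : ℕ} (G : SimpleGraph (Fin n)) (S : Finset (Fin n)) : Prop :=
  ¬ ∃ S1 S2 : Finset (Fin n), S1.Nonempty ∧ S2.Nonempty ∧
      Disjoint S1 S2 ∧ S1 ∪ S2 = S ∧
      alpha0On G S = alpha0On G S1 + alpha0On G S2

/-- `G` is edge critical: deleting any edge lowers the vertex covering number. -/
def EdgeCritical {n : ℕ} (G : SimpleGraph (Fin n)) : Prop :=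
  ∀ i j : Fin n, G.Adj i j →
    alpha0On (G.deleteEdges {s(i, j)}) Finset.univ < alpha0On G Finset.univ

/-- `G` is vertex critical: deleting any vertex (with all incident edges)
lowers the vertex covering number. -/
def VertexCritical {n : ℕ} (G : SimpleGraph (Fin n)) : Prop :=
  ∀ x : Fin n, alpha0On G (Finset.univ.erase x) < alpha0On G Finset.univ

private lemma alpha0On_exists {n : ℕ} (G : SimpleGraph (Fin n)) (S : Finset (Fin n)) :
    ∃ C : Finset (Fin n), C ⊆ S ∧ (∀ i ∈ S, ∀ j ∈ S, G.Adj i j → i ∈ C ∨ j ∈ C) ∧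
      C.card = alpha0On G S := by
  have hne : {k : ℕ | ∃ C : Finset (Fin n), C ⊆ S ∧
      (∀ i ∈ S, ∀ j ∈ S, G.Adj i j → i ∈ C ∨ j ∈ C) ∧ C.card = k}.Nonempty :=
    ⟨S.card, S, le_refl S, fun i hi _ _ _ => Or.inl hi, rfl⟩
  exact Nat.sInf_mem hne

private lemma alpha0On_le {n : ℕ} (G : SimpleGraph (Fin n)) {S C : Finset (Fin n)}
    (hCS : C ⊆ S) (hcov : ∀ i ∈ S, ∀ j ∈ S, G.Adj i j → i ∈ C ∨ j ∈ C) :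
    alpha0On G S ≤ C.card :=
  Nat.sInf_le ⟨C, hCS, hcov, rfl⟩

theorem edgeCritical_implies_irreducible_implies_vertexCritical {n : ℕ}
    (G : SimpleGraph (Fin n)) (hconn : G.Connected)
    (hE : ∃ i j : Fin n, G.Adj i j) :
    (EdgeCritical G → IrreducibleOn G Finset.univ) ∧
      (IrreducibleOn G Finset.univ → VertexCritical G) := by
  constructor
  · -- Edge critical → irreducible
    intro hec hred
    obtain ⟨S1, S2, h1, h2, hdisj, hunion, heq⟩ := hred
    obtain ⟨a, ha⟩ := h1
    obtain ⟨b, hb⟩ := h2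
    have hbS1 : b ∉ S1 := Finset.disjoint_right.mp hdisj hb
    obtain ⟨p⟩ := hconn.preconnected a b
    obtain ⟨d, _, hdfst, hdsnd⟩ := p.exists_boundary_dart (↑S1 : Set (Fin n))
      (by exact_mod_cast ha) (by exact_mod_cast hbS1)
    set i := d.fst
    set j := d.snd
    have hiS1 : i ∈ S1 := by exact_mod_cast hdfst
    have hjS1 : j ∉ S1 := by exact_mod_cast hdsnd
    have hjS2 : j ∈ S2 := by
      have : j ∈ S1 ∪ S2 := hunion ▸ Finset.mem_univ j
      rcases Finset.mem_union.mp this with h | h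
      · exact absurd h hjS1
      · exact h
    have hadj : G.Adj i j := d.adj
    have hlt := hec i j hadj
    obtain ⟨C, hCsub, hCcov, hCcard⟩ := alpha0On_exists (G.deleteEdges {s(i, j)}) Finset.univ
    -- the deleted edge is not within S1 nor within S2
    have hcross : ∀ u v : Fin n, (u ∈ S1 ∧ v ∈ S1) ∨ (u ∈ S2 ∧ v ∈ S2) →
        s(u, v) ≠ s(i, j) := by
      rintro u v huv hne
      rcases Sym2.eq_iff.mp hne with ⟨rfl, rfl⟩ | ⟨rfl, rfl⟩
      · rcases huv with ⟨_, hv⟩ | ⟨hu, _⟩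
        · exact hjS1 hv
        · exact (Finset.disjoint_left.mp hdisj hiS1) hu
      · rcases huv with ⟨hu, _⟩ | ⟨_, hv⟩
        · exact hjS1 hu
        · exact (Finset.disjoint_left.mp hdisj hiS1) hv
    have hcov1 : alpha0On G S1 ≤ (C ∩ S1).card := by
      apply alpha0On_le
      · exact Finset.inter_subset_right
      · intro u hu v hv huv
        have hadj' : (G.deleteEdges {s(i, j)}).Adj u v := by
          rw [SimpleGraph.deleteEdges_adj]
          exact ⟨huv, by simpa using hcross u v (Or.inl ⟨hu, hv⟩)⟩
        rcases hCcov u (Finset.mem_univ u) v (Finset.mem_univ v) hadj' with h | h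
        · exact Or.inl (Finset.mem_inter.mpr ⟨h, hu⟩)
        · exact Or.inr (Finset.mem_inter.mpr ⟨h, hv⟩)
    have hcov2 : alpha0On G S2 ≤ (C ∩ S2).card := by
      apply alpha0On_le
      · exact Finset.inter_subset_right
      · intro u hu v hv huv
        have hadj' : (G.deleteEdges {s(i, j)}).Adj u v := by
          rw [SimpleGraph.deleteEdges_adj]
          exact ⟨huv, by simpa using hcross u v (Or.inr ⟨hu, hv⟩)⟩
        rcases hCcov u (Finset.mem_univ u) v (Finset.mem_univ v) hadj' with h | h
        · exact Or.inl (Finset.mem_inter.mpr ⟨h, hu⟩)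
        · exact Or.inr (Finset.mem_inter.mpr ⟨h, hv⟩)
    have hdisjC : Disjoint (C ∩ S1) (C ∩ S2) :=
      Finset.disjoint_of_subset_left Finset.inter_subset_right
        (Finset.disjoint_of_subset_right Finset.inter_subset_right hdisj)
    have hsum : (C ∩ S1).card + (C ∩ S2).card ≤ C.card := by
      rw [← Finset.card_union_of_disjoint hdisjC, ← Finset.inter_union_distrib_left, hunion]
      exact Finset.card_le_card Finset.inter_subset_left
    omega
  · -- Irreducible → vertex critical
    intro hirr x
    by_contra hnot
    push_neg at hnot
    -- α(G - x) ≤ α(G)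
    obtain ⟨C, hCsub, hCcov, hCcard⟩ := alpha0On_exists G Finset.univ
    have hle : alpha0On G (Finset.univ.erase x) ≤ alpha0On G Finset.univ := by
      calc alpha0On G (Finset.univ.erase x) ≤ (C.erase x).card := by
            apply alpha0On_le
            · exact Finset.erase_subset_erase x hCsub
            · intro u hu v hv huv
              rcases hCcov u (Finset.mem_univ u) v (Finset.mem_univ v) huv with h | h
              · exact Or.inl (Finset.mem_erase.mpr ⟨(Finset.mem_erase.mp hu).1, h⟩)
              · exact Or.inr (Finset.mem_erase.mpr ⟨(Finset.mem_erase.mp hv).1, h⟩)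
        _ ≤ C.card := Finset.card_le_card (Finset.erase_subset x C)
        _ = alpha0On G Finset.univ := hCcard
    have hzero : alpha0On G {x} = 0 := by
      have := alpha0On_le G (C := (∅ : Finset (Fin n))) (S := {x})
        (Finset.empty_subset _)
        (fun u hu v hv huv => by
          rw [Finset.mem_singleton] at hu hv
          exact absurd (hu.trans hv.symm) huv.ne)
      simpa using this
    have hS2ne : (Finset.univ.erase x).Nonempty := by
      obtain ⟨u, v, huv⟩ := hE
      by_cases h : u = x
      · exact ⟨v, Finset.mem_erase.mpr ⟨fun hvx => huv.ne (h.trans hvx.symm), Finset.mem_univ v⟩⟩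
      · exact ⟨u, Finset.mem_erase.mpr ⟨h, Finset.mem_univ u⟩⟩
    exact hirr ⟨{x}, Finset.univ.erase x, Finset.singleton_nonempty x, hS2ne,
      Finset.disjoint_singleton_left.mpr (Finset.notMem_erase x _),
      by ext y; by_cases hy : y = x <;> simp [hy],
      by rw [hzero, Nat.zero_add]; exact le_antisymm hnot hle⟩
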